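/- Let O be a Hermitian d×d complex matrix with at least three distinct eigenvalues. Then for every finite family of pairs (c_x, A_x) with c_x > 0 and A_x Hermitian with ‖A_x‖ ≤ 1 such that O = ∑_x c_x·A_x, there exists a unit vector ψ in ℂ^d (which may be taken supported on three eigenspaces of O) such that (∑_x c_x·√(1 − ⟨ψ, A_x ψ⟩²))² > ⟨ψ, O² ψ⟩ − ⟨ψ, O ψ⟩². -/

import Mathlib

/-!
Pick eigenvectors `u₁, u₂, u₃` of `O` with distinct eigenvalues `λ₁, λ₂, λ₃`. If some `A_x` has
`⟨u_k, A_x u_k⟩ ≠ ±1`, then `u_k` has zero variance but positive cost. Otherwise, by the equality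
case of Cauchy–Schwarz, every `u_k` is an eigenvector of every `A_x` with eigenvalue
`e_k(x) = ±1`, and `λ_k = ∑_x c_x e_k(x)`. On `ψ = (u₁ + u₂ + u₃)/√3` let `D_x ∈ ℝ³` be the vector
of pairwise differences of `e₁(x), e₂(x), e₃(x)`. Then the variance is `‖∑_x c_x D_x‖² / 9` and,
since `e_k(x)² = 1`, the cost is `(∑_x c_x ‖D_x‖)² / 9`. The triangle inequality is strict: a
nonzero `D_x` has a zero coordinate while `∑_x c_x D_x`, the vector of pairwise differences of
the `λ_k`, has none, so the `D_x` do not all lie on one ray.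
-/

open scoped Matrix Matrix.Norms.L2Operator

/-- The expectation value `⟨ψ, A ψ⟩` (real part) of a matrix `A` on a vector `ψ`. -/
noncomputable def expval {d : ℕ} (A : Matrix (Fin d) (Fin d) ℂ) (ψ : Fin d → ℂ) : ℝ :=
  (star ψ ⬝ᵥ A.mulVec ψ).re

open Finset RCLike

theorem norm_sum_lt_sum_norm_of_ne_smul {ι E : Type*} [NormedAddCommGroup E] [NormedSpace ℝ E]
    [StrictConvexSpace ℝ E] {s : Finset ι} {v : ι → E} {i : ι} (hi : i ∈ s) (hvi : v i ≠ 0)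
    (h : ∀ r : ℝ, ∑ k ∈ s, v k ≠ r • v i) : ‖∑ k ∈ s, v k‖ < ∑ k ∈ s, ‖v k‖ := by
  classical
  obtain ⟨j, hj, hij⟩ : ∃ j ∈ s, ¬SameRay ℝ (v i) (v j) := by
    by_contra! hray
    choose! r _ hr using fun j hj => (hray j hj).exists_nonneg_left hvi
    exact h (∑ j ∈ s, r j) (by rw [sum_smul]; exact sum_congr rfl fun j hj => (hr j hj).symm)
  have hji : j ∈ s.erase i := mem_erase.2 ⟨by rintro rfl; exact hij SameRay.rfl, hj⟩
  rw [← add_sum_erase s v hi, ← add_sum_erase s (‖v ·‖) hi, ← add_sum_erase _ v hji,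
    ← add_sum_erase _ (‖v ·‖) hji, ← add_assoc, ← add_assoc]
  exact (norm_add_le _ _).trans_lt
    (add_lt_add_of_lt_of_le (norm_add_lt_of_not_sameRay hij) (norm_sum_le _ _))

theorem eq_re_inner_smul_of_re_inner_sq_eq_one {𝕜 E : Type*} [RCLike 𝕜] [NormedAddCommGroup E]
    [InnerProductSpace 𝕜 E] {v w : E} (hv : ‖v‖ = 1) (hw : ‖w‖ ≤ 1)
    (h : re (inner 𝕜 v w) ^ 2 = 1) : w = (re (inner 𝕜 v w) : 𝕜) • v := by
  set t := re (inner 𝕜 v w) with ht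
  have hsq : ‖w - (t : 𝕜) • v‖ ^ 2 ≤ 0 := by
    rw [@norm_sub_sq 𝕜, inner_smul_right, re_ofReal_mul, inner_re_symm, ← ht, norm_smul, hv,
      norm_ofReal, mul_one, sq_abs]
    nlinarith [norm_nonneg w]
  rw [← sub_eq_zero, ← norm_eq_zero]
  exact pow_eq_zero_iff two_ne_zero |>.1 (le_antisymm hsq (by positivity))

theorem exists_three_ne_of_three_le_card_image {α β : Type*} [DecidableEq β] {f : α → β}
    {s : Finset α} (h : 3 ≤ #(s.image f)) : ∃ i j k, f i ≠ f j ∧ f i ≠ f k ∧ f j ≠ f k := by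
  obtain ⟨a, ha, b, hb, c, hc, hab, hac, hbc⟩ := two_lt_card.1 h
  obtain ⟨i, -, rfl⟩ := mem_image.1 ha
  obtain ⟨j, -, rfl⟩ := mem_image.1 hb
  obtain ⟨k, -, rfl⟩ := mem_image.1 hc
  exact ⟨i, j, k, hab, hac, hbc⟩

theorem Matrix.IsHermitian.star_eigenvectorBasis_dotProduct {n : Type*} [Fintype n]
    [DecidableEq n] {O : Matrix n n ℂ} (hO : O.IsHermitian) (i j : n) :
    star ⇑(hO.eigenvectorBasis i) ⬝ᵥ ⇑(hO.eigenvectorBasis j) = if i = j then 1 else 0 := by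
  rw [dotProduct_comm, ← EuclideanSpace.inner_eq_star_dotProduct]
  exact orthonormal_iff_ite.1 hO.eigenvectorBasis.orthonormal i j

theorem star_smul_sum_dotProduct_mulVec {n κ : Type*} [Fintype n] [DecidableEq κ]
    {M : Matrix n n ℂ} {s : Finset κ} {u : κ → n → ℂ} {μ : κ → ℝ}
    (hu : ∀ i ∈ s, ∀ j ∈ s, star (u i) ⬝ᵥ u j = if i = j then 1 else 0)
    (hM : ∀ k ∈ s, M *ᵥ u k = μ k • u k) (r : ℝ) :
    star (r • ∑ k ∈ s, u k) ⬝ᵥ M *ᵥ (r • ∑ k ∈ s, u k) = ((r ^ 2 * ∑ k ∈ s, μ k : ℝ) : ℂ) := by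
  have hMsum : M *ᵥ ∑ k ∈ s, u k = ∑ k ∈ s, μ k • u k := by
    rw [Matrix.mulVec_sum]; exact sum_congr rfl hM
  simp only [Matrix.mulVec_smul, hMsum, star_smul, star_sum, smul_dotProduct, dotProduct_smul,
    sum_dotProduct, dotProduct_sum]
  have hnorm : ∀ j ∈ s, ∑ i ∈ s, star (u i) ⬝ᵥ u j = 1 := fun j hj => by
    rw [sum_congr rfl fun i hi => hu i hi j hj, sum_ite_eq', if_pos hj]
  rw [sum_congr rfl fun j hj => by rw [hnorm j hj]]
  simp only [star_trivial, mul_one, Complex.real_smul, smul_sum]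
  push_cast
  rw [mul_sum]
  exact sum_congr rfl fun _ _ => by ring

noncomputable def pairDiffs (a b c : ℝ) : EuclideanSpace ℝ (Fin 3) := !₂[a - b, a - c, b - c]

theorem norm_pairDiffs_sq (a b c : ℝ) :
    ‖pairDiffs a b c‖ ^ 2 = (a - b) ^ 2 + (a - c) ^ 2 + (b - c) ^ 2 := by
  simp [pairDiffs, EuclideanSpace.norm_sq_eq, Fin.sum_univ_three]

theorem sum_smul_pairDiffs {ι : Type*} [Fintype ι] (c e₁ e₂ e₃ : ι → ℝ) :
    ∑ x, c x • pairDiffs (e₁ x) (e₂ x) (e₃ x)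
      = pairDiffs (∑ x, c x * e₁ x) (∑ x, c x * e₂ x) (∑ x, c x * e₃ x) := by
  ext k
  fin_cases k <;> simp [pairDiffs, mul_sub, sum_sub_distrib]

theorem sqrt_one_sub_mean_sq {a b c : ℝ} (ha : a ^ 2 = 1) (hb : b ^ 2 = 1) (hc : c ^ 2 = 1) :
    √(1 - ((a + b + c) / 3) ^ 2) = ‖pairDiffs a b c‖ / 3 := by
  rw [← Real.sqrt_sq (by positivity : 0 ≤ ‖pairDiffs a b c‖ / 3), div_pow ‖_‖,
    norm_pairDiffs_sq]
  congr 1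
  linear_combination (-1 / 3) * (ha + hb + hc)

theorem pairDiffs_ne_smul {a b c l₁ l₂ l₃ : ℝ} (ha : a ^ 2 = 1) (hb : b ^ 2 = 1)
    (hc : c ^ 2 = 1) (h₁₂ : l₁ ≠ l₂) (h₁₃ : l₁ ≠ l₃) (h₂₃ : l₂ ≠ l₃) (r : ℝ) :
    pairDiffs l₁ l₂ l₃ ≠ r • pairDiffs a b c := by
  intro h
  have h₀ := congrArg (· 0) h
  have h₁ := congrArg (· 1) h
  have h₂ := congrArg (· 2) h
  simp [pairDiffs] at h₀ h₁ h₂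
  rcases sq_eq_sq_iff_eq_or_eq_neg.1 (ha.trans hb.symm) with rfl | rfl
  · exact h₁₂ (sub_eq_zero.1 (by simpa using h₀))
  rcases sq_eq_sq_iff_eq_or_eq_neg.1 (ha.trans hc.symm) with rfl | hbc
  · exact h₁₃ (sub_eq_zero.1 (by simpa using h₁))
  · exact h₂₃ (sub_eq_zero.1 (by simpa [neg_inj.1 hbc] using h₂))

theorem mean_sq_sub_sq_mean_lt_of_sq_eq_one {ι : Type*} [Fintype ι] {c e₁ e₂ e₃ : ι → ℝ}
    {l₁ l₂ l₃ : ℝ} (hc : ∀ x, 0 < c x) (he₁ : ∀ x, e₁ x ^ 2 = 1) (he₂ : ∀ x, e₂ x ^ 2 = 1)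
    (he₃ : ∀ x, e₃ x ^ 2 = 1) (hl₁ : l₁ = ∑ x, c x * e₁ x) (hl₂ : l₂ = ∑ x, c x * e₂ x)
    (hl₃ : l₃ = ∑ x, c x * e₃ x) (h₁₂ : l₁ ≠ l₂) (h₁₃ : l₁ ≠ l₃) (h₂₃ : l₂ ≠ l₃) :
    (l₁ ^ 2 + l₂ ^ 2 + l₃ ^ 2) / 3 - ((l₁ + l₂ + l₃) / 3) ^ 2
      < (∑ x, c x * √(1 - ((e₁ x + e₂ x + e₃ x) / 3) ^ 2)) ^ 2 := by
  set v : ι → EuclideanSpace ℝ (Fin 3) := fun x => c x • pairDiffs (e₁ x) (e₂ x) (e₃ x)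
  have hsum : ∑ x, v x = pairDiffs l₁ l₂ l₃ := by
    rw [hl₁, hl₂, hl₃]; exact sum_smul_pairDiffs c e₁ e₂ e₃
  have hvar : (l₁ ^ 2 + l₂ ^ 2 + l₃ ^ 2) / 3 - ((l₁ + l₂ + l₃) / 3) ^ 2
      = ‖∑ x, v x‖ ^ 2 / 3 ^ 2 := by
    rw [hsum, norm_pairDiffs_sq]; ring
  have hcost : ∑ x, c x * √(1 - ((e₁ x + e₂ x + e₃ x) / 3) ^ 2) = (∑ x, ‖v x‖) / 3 := by
    rw [sum_div]
    refine sum_congr rfl fun x _ => ?_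
    rw [sqrt_one_sub_mean_sq (he₁ x) (he₂ x) (he₃ x), norm_smul, Real.norm_of_nonneg (hc x).le,
      mul_div_assoc]
  obtain ⟨x, hx⟩ : ∃ x, v x ≠ 0 := by
    by_contra! h0
    have h0' := congrArg (· 0) hsum
    simp [h0, pairDiffs] at h0'
    exact h₁₂ (sub_eq_zero.1 h0'.symm)
  have hlt : ‖∑ x, v x‖ < ∑ x, ‖v x‖ :=
    norm_sum_lt_sum_norm_of_ne_smul (mem_univ x) hx fun r h =>
      pairDiffs_ne_smul (he₁ x) (he₂ x) (he₃ x) h₁₂ h₁₃ h₂₃ (r * c x) (by rw [← hsum, h, smul_smul])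
  rw [hvar, hcost, div_pow]
  gcongr

section Expval

variable {d : ℕ} {A : Matrix (Fin d) (Fin d) ℂ} {ψ : Fin d → ℂ}

theorem expval_eq_re_inner :
    expval A ψ = re (inner ℂ (WithLp.toLp 2 ψ) (WithLp.toLp 2 (A *ᵥ ψ))) := by
  rw [EuclideanSpace.inner_toLp_toLp, dotProduct_comm]
  rfl

theorem norm_toLp_eq_one (hψ : star ψ ⬝ᵥ ψ = 1) : ‖WithLp.toLp 2 ψ‖ = 1 := by
  rw [← pow_eq_one_iff_of_nonneg (norm_nonneg _) two_ne_zero, @norm_sq_eq_re_inner ℂ,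
    EuclideanSpace.inner_toLp_toLp, dotProduct_comm, hψ, one_re]

theorem norm_toLp_mulVec_le_one (hψ : star ψ ⬝ᵥ ψ = 1) (hA : ‖A‖ ≤ 1) :
    ‖WithLp.toLp 2 (A *ᵥ ψ)‖ ≤ 1 := by
  simpa [norm_toLp_eq_one hψ] using (A.l2_opNorm_mulVec (WithLp.toLp 2 ψ)).trans
    (mul_le_of_le_one_left (norm_nonneg _) hA)

theorem expval_sq_le_one (hψ : star ψ ⬝ᵥ ψ = 1) (hA : ‖A‖ ≤ 1) : expval A ψ ^ 2 ≤ 1 := by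
  rw [expval_eq_re_inner, sq_le_one_iff_abs_le_one]
  exact (abs_re_le_norm _).trans <| (norm_inner_le_norm _ _).trans
    (mul_le_one₀ (norm_toLp_eq_one hψ).le (norm_nonneg _) (norm_toLp_mulVec_le_one hψ hA))

theorem mulVec_eq_expval_smul (hψ : star ψ ⬝ᵥ ψ = 1) (hA : ‖A‖ ≤ 1) (h : expval A ψ ^ 2 = 1) :
    A *ᵥ ψ = expval A ψ • ψ := by
  rw [expval_eq_re_inner] at h ⊢
  refine WithLp.toLp_injective 2 ?_
  rw [WithLp.toLp_smul, ← Complex.coe_smul]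
  exact eq_re_inner_smul_of_re_inner_sq_eq_one (norm_toLp_eq_one hψ)
    (norm_toLp_mulVec_le_one hψ hA) h

theorem expval_of_mulVec_eq_smul {μ : ℝ} (hψ : star ψ ⬝ᵥ ψ = 1) (h : A *ᵥ ψ = μ • ψ) :
    expval A ψ = μ := by
  simp [expval, h, hψ]

theorem expval_sum_smul {ι : Type*} [Fintype ι] (c : ι → ℝ) (A : ι → Matrix (Fin d) (Fin d) ℂ)
    (ψ : Fin d → ℂ) : expval (∑ x, c x • A x) ψ = ∑ x, c x * expval (A x) ψ := by
  simp [expval, Matrix.sum_mulVec, dotProduct_sum, Complex.re_sum, Matrix.smul_mulVec,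
    ← Complex.coe_smul]

theorem mul_self_mulVec_of_mulVec_eq_smul {u : Fin d → ℂ} {μ : ℝ} (h : A *ᵥ u = μ • u) :
    (A * A) *ᵥ u = (μ ^ 2) • u := by
  rw [← Matrix.mulVec_mulVec, h, Matrix.mulVec_smul, h, smul_smul, sq]

end Expval

section Cost

noncomputable def vnVariance {d : ℕ} (O : Matrix (Fin d) (Fin d) ℂ) (ψ : Fin d → ℂ) : ℝ :=
  expval (O * O) ψ - expval O ψ ^ 2

noncomputable def allocationCost {d : ℕ} {ι : Type*} [Fintype ι] (c : ι → ℝ)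
    (A : ι → Matrix (Fin d) (Fin d) ℂ) (ψ : Fin d → ℂ) : ℝ :=
  (∑ x, c x * √(1 - expval (A x) ψ ^ 2)) ^ 2

variable {d : ℕ} {O : Matrix (Fin d) (Fin d) ℂ} {ι : Type*} [Fintype ι] {c : ι → ℝ}
  {A : ι → Matrix (Fin d) (Fin d) ℂ}

theorem vnVariance_lt_allocationCost_of_mulVec_eq_smul (hc : ∀ x, 0 < c x)
    (hAn : ∀ x, ‖A x‖ ≤ 1) {u : Fin d → ℂ} (hu : star u ⬝ᵥ u = 1) {μ : ℝ}
    (hOu : O *ᵥ u = μ • u) {x : ι} (hx : expval (A x) u ^ 2 ≠ 1) :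
    vnVariance O u < allocationCost c A u := by
  rw [vnVariance, expval_of_mulVec_eq_smul hu hOu,
    expval_of_mulVec_eq_smul hu (mul_self_mulVec_of_mulVec_eq_smul hOu), sub_self]
  refine pow_pos (sum_pos' (fun y _ => mul_nonneg (hc y).le (Real.sqrt_nonneg _))
    ⟨x, mem_univ x, ?_⟩) 2
  exact mul_pos (hc x) (Real.sqrt_pos.2
    (sub_pos.2 ((expval_sq_le_one hu (hAn x)).lt_of_ne hx)))

theorem exists_vnVariance_lt_allocationCost_of_sq_expval_eq_one {κ : Type*} [DecidableEq κ]
    (hc : ∀ x, 0 < c x) (hAn : ∀ x, ‖A x‖ ≤ 1) {u : κ → Fin d → ℂ}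
    (hu : ∀ i j, star (u i) ⬝ᵥ u j = if i = j then 1 else 0) {μ : κ → ℝ}
    (hOu : ∀ k, O *ᵥ u k = μ k • u k) (hμ : ∀ k, μ k = ∑ x, c x * expval (A x) (u k))
    {i₁ i₂ i₃ : κ} (h₁₂ : μ i₁ ≠ μ i₂) (h₁₃ : μ i₁ ≠ μ i₃) (h₂₃ : μ i₂ ≠ μ i₃)
    (hsign : ∀ x, ∀ k ∈ ({i₁, i₂, i₃} : Finset κ), expval (A x) (u k) ^ 2 = 1) :
    ∃ ψ : Fin d → ℂ, star ψ ⬝ᵥ ψ = 1 ∧ vnVariance O ψ < allocationCost c A ψ := by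
  set s : Finset κ := {i₁, i₂, i₃}
  have hne₁₂ : i₁ ≠ i₂ := fun h => h₁₂ (congrArg μ h)
  have hne₁₃ : i₁ ≠ i₃ := fun h => h₁₃ (congrArg μ h)
  have hsum : ∀ f : κ → ℝ, ∑ k ∈ s, f k = f i₁ + f i₂ + f i₃ := fun f => by
    rw [sum_insert (by simp [hne₁₂, hne₁₃]), sum_pair (fun h => h₂₃ (congrArg μ h)), add_assoc]
  set ψ := (√3)⁻¹ • ∑ k ∈ s, u k
  have hψ : ∀ (M : Matrix (Fin d) (Fin d) ℂ) (ν : κ → ℝ), (∀ k ∈ s, M *ᵥ u k = ν k • u k) →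
      star ψ ⬝ᵥ M *ᵥ ψ = (((ν i₁ + ν i₂ + ν i₃) / 3 : ℝ) : ℂ) := fun M ν hM => by
    rw [star_smul_sum_dotProduct_mulVec (fun i _ j _ => hu i j) hM, hsum, inv_pow,
      Real.sq_sqrt zero_le_three, inv_mul_eq_div]
  have hexpval : ∀ (M : Matrix (Fin d) (Fin d) ℂ) (ν : κ → ℝ), (∀ k ∈ s, M *ᵥ u k = ν k • u k) →
      expval M ψ = (ν i₁ + ν i₂ + ν i₃) / 3 := fun M ν hM => by
    rw [expval, hψ M ν hM, Complex.ofReal_re]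
  have hAψ : ∀ x, expval (A x) ψ
      = (expval (A x) (u i₁) + expval (A x) (u i₂) + expval (A x) (u i₃)) / 3 := fun x =>
    hexpval (A x) _ fun k hk => mulVec_eq_expval_smul (by simp [hu]) (hAn x) (hsign x k hk)
  refine ⟨ψ, ?_, ?_⟩
  · have h1 := hψ 1 (fun _ => 1) fun k _ => by rw [Matrix.one_mulVec, one_smul]
    rw [Matrix.one_mulVec] at h1
    rw [h1]
    norm_num
  rw [vnVariance, allocationCost, hexpval O μ fun k _ => hOu k,
    hexpval (O * O) (μ · ^ 2) fun k _ => mul_self_mulVec_of_mulVec_eq_smul (hOu k)]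
  simp only [hAψ]
  exact mean_sq_sub_sq_mean_lt_of_sq_eq_one hc (hsign · i₁ (by simp [s]))
    (hsign · i₂ (by simp [s])) (hsign · i₃ (by simp [s])) (hμ i₁) (hμ i₂) (hμ i₃) h₁₂ h₁₃ h₂₃

end Cost

theorem stmt_18_general {d : ℕ} (O : Matrix (Fin d) (Fin d) ℂ) (hO : O.IsHermitian)
    (h3 : 3 ≤ (Finset.univ.image hO.eigenvalues).card)
    (ι : Type*) [Fintype ι] (c : ι → ℝ) (A : ι → Matrix (Fin d) (Fin d) ℂ)
    (hc : ∀ x, 0 < c x) (hAn : ∀ x, ‖A x‖ ≤ 1)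
    (hdecomp : O = ∑ x, c x • A x) :
    ∃ ψ : Fin d → ℂ, star ψ ⬝ᵥ ψ = 1 ∧
      (∑ x, c x * Real.sqrt (1 - expval (A x) ψ ^ 2)) ^ 2
        > (star ψ ⬝ᵥ (O * O).mulVec ψ).re - (star ψ ⬝ᵥ O.mulVec ψ).re ^ 2 := by
  obtain ⟨i₁, i₂, i₃, h₁₂, h₁₃, h₂₃⟩ := exists_three_ne_of_three_le_card_image h3
  set u : Fin d → Fin d → ℂ := fun k => ⇑(hO.eigenvectorBasis k)
  have hu : ∀ i j, star (u i) ⬝ᵥ u j = if i = j then 1 else 0 :=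
    hO.star_eigenvectorBasis_dotProduct
  have hOu : ∀ k, O *ᵥ u k = hO.eigenvalues k • u k := hO.mulVec_eigenvectorBasis
  have hμ : ∀ k, hO.eigenvalues k = ∑ x, c x * expval (A x) (u k) := fun k => by
    rw [← expval_sum_smul, ← hdecomp, expval_of_mulVec_eq_smul (by simp [hu]) (hOu k)]
  by_cases hsign : ∀ x, ∀ k ∈ ({i₁, i₂, i₃} : Finset (Fin d)), expval (A x) (u k) ^ 2 = 1
  · exact exists_vnVariance_lt_allocationCost_of_sq_expval_eq_one hc hAn hu hOu hμ
      h₁₂ h₁₃ h₂₃ hsign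
  · push Not at hsign
    obtain ⟨x, k, -, hx⟩ := hsign
    exact ⟨u k, by simp [hu],
      vnVariance_lt_allocationCost_of_mulVec_eq_smul hc hAn (by simp [hu]) (hOu k) hx⟩

/-- Impossibility part of **Lemma 4**: if a Hermitian matrix `O` has at least three
distinct eigenvalues, then for every linear decomposition `O = ∑_x c_x A_x` with
`c_x > 0` and `A_x` Hermitian of (`ℓ²`-operator) norm at most `1`, there exists a unit
vector `ψ` on which the optimal-allocation cost `(∑_x c_x √(1 − ⟨ψ, A_x ψ⟩²))²` strictly
exceeds the von Neumann variance `⟨ψ, O² ψ⟩ − ⟨ψ, O ψ⟩²`. -/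
theorem stmt_18 {d : ℕ} (O : Matrix (Fin d) (Fin d) ℂ) (hO : O.IsHermitian)
    (h3 : 3 ≤ (Finset.univ.image hO.eigenvalues).card)
    (ι : Type*) [Fintype ι] (c : ι → ℝ) (A : ι → Matrix (Fin d) (Fin d) ℂ)
    (hc : ∀ x, 0 < c x) (hA : ∀ x, (A x).IsHermitian) (hAn : ∀ x, ‖A x‖ ≤ 1)
    (hdecomp : O = ∑ x, c x • A x) :
    ∃ ψ : Fin d → ℂ, star ψ ⬝ᵥ ψ = 1 ∧
      (∑ x, c x * Real.sqrt (1 - expval (A x) ψ ^ 2)) ^ 2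
        > (star ψ ⬝ᵥ (O * O).mulVec ψ).re - (star ψ ⬝ᵥ O.mulVec ψ).re ^ 2 :=
  stmt_18_general O hO h3 ι c A hc hAn hdecomp
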